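/- arXiv:1912.08328 — 3 statements merged into one kernel-verified Lean document; each statement's English description precedes it below -/
import Mathlib

section
/- Let P_3 denote the path with three vertices and two edges. There exists an absolute constant c > 1 such that for every graph G with G →_2 P_3 and every positive integer t, the blowup Ramsey number satisfies B_2(G → P_3; t) ≤ c^t. -/
/-- The `n`-blowup of a graph: each vertex is replaced by an independent set of `n` vertices,
and each edge by a complete bipartite graph between the corresponding sets. -/
def blowupGraph {V : Type} (G : SimpleGraph V) (n : ℕ) : SimpleGraph (V × Fin n) :=
  SimpleGraph.comap Prod.fst G

/-- The coloring `C` admits a monochromatic copy of `H` in `G`. -/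
def HasMonoCopy {V α : Type} (G : SimpleGraph V) (H : SimpleGraph α) {r : ℕ}
    (C : Sym2 V → Fin r) : Prop :=
  ∃ (f : α → V) (c : Fin r), Function.Injective f ∧
    ∀ a b, H.Adj a b → G.Adj (f a) (f b) ∧ C s(f a, f b) = c

/-- `G →_r H`: every `r`-coloring of the edges of `G` contains a monochromatic copy of `H`. -/
def ArrowsFor {V α : Type} (G : SimpleGraph V) (H : SimpleGraph α) (r : ℕ) : Prop :=
  ∀ C : Sym2 V → Fin r, HasMonoCopy G H C

/-- The coloring `C` of `G[n]` admits a monochromatic canonical copy of `H[t]`: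
an embedding `φ` of `H` into `G`, together with `t` blowup vertices `ψ a` in the part indexed
by `φ a` for each vertex `a` of `H`, all of whose blowup edges receive the same color `c`. -/
def HasMonoCanonicalBlowup {V α : Type} (G : SimpleGraph V) (H : SimpleGraph α)
    (n t r : ℕ) (C : Sym2 (V × Fin n) → Fin r) : Prop :=
  ∃ (φ : α → V) (ψ : α → Fin t → Fin n) (c : Fin r),
    Function.Injective φ ∧ (∀ a, Function.Injective (ψ a)) ∧
    ∀ a b, H.Adj a b → G.Adj (φ a) (φ b) ∧ ∀ i j, C s((φ a, ψ a i), (φ b, ψ b j)) = c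

/-- Every `r`-coloring of the edges of `G[n]` contains a monochromatic canonical copy of `H[t]`.
The blowup Ramsey number `B_r(G → H; t)` is the minimum such `n`. -/
def BlowupArrow {V α : Type} (G : SimpleGraph V) (H : SimpleGraph α) (r n t : ℕ) : Prop :=
  ∀ C : Sym2 (V × Fin n) → Fin r, HasMonoCanonicalBlowup G H n t r C

namespace BRP
open Finset
variable {V : Type}

/-- `c`-degree of blowup vertex `(p,y)` toward part `q`. -/
def dg (n : ℕ) (C : Sym2 (V × Fin n) → Fin 2) (c : Fin 2) (p q : V) (y : Fin n) : ℕ :=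
  (univ.filter fun j : Fin n => C s((p, y), (q, j)) = c).card

lemma dg_le (n : ℕ) (C : Sym2 (V × Fin n) → Fin 2) (c : Fin 2) (p q : V) (y : Fin n) :
    dg n C c p q y ≤ n := by
  simpa [dg] using (Finset.card_filter_le (univ : Finset (Fin n)) _)

lemma dg_add (n : ℕ) (C : Sym2 (V × Fin n) → Fin 2) {c c' : Fin 2} (hcc : c ≠ c')
    (p q : V) (y : Fin n) : dg n C c p q y + dg n C c' p q y = n := by
  classical
  have h1 : (univ.filter fun j : Fin n => C s((p, y), (q, j)) = c')
      = (univ.filter fun j : Fin n => ¬ C s((p, y), (q, j)) = c) := by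
    apply Finset.filter_congr; intro j _
    constructor
    · intro h; omega
    · intro h; omega
  rw [dg, dg, h1, Finset.card_filter_add_card_filter_not]
  simp

/-- the set of `c`-strong vertices of part `p` toward part `q` (c-degree > n - h). -/
def st (n : ℕ) (C : Sym2 (V × Fin n) → Fin 2) (h : ℕ) (c : Fin 2) (p q : V) :
    Finset (Fin n) :=
  univ.filter fun y => n < h + dg n C c p q y

lemma mem_st {n : ℕ} {C : Sym2 (V × Fin n) → Fin 2} {h : ℕ} {c : Fin 2} {p q : V}
    {y : Fin n} : y ∈ st n C h c p q ↔ n < h + dg n C c p q y := by simp [st]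

/-- vertices of part `v` that are `c`-big toward both parts `a` and `b`. -/
def bd (n : ℕ) (C : Sym2 (V × Fin n) → Fin 2) (h : ℕ) (c : Fin 2) (v a b : V) :
    Finset (Fin n) :=
  univ.filter fun y => h ≤ dg n C c v a y ∧ h ≤ dg n C c v b y

lemma mem_bd {n : ℕ} {C : Sym2 (V × Fin n) → Fin 2} {h : ℕ} {c : Fin 2} {v a b : V}
    {y : Fin n} : y ∈ bd n C h c v a b ↔ h ≤ dg n C c v a y ∧ h ≤ dg n C c v b y := by
  simp [bd]

lemma Efact (n : ℕ) (C : Sym2 (V × Fin n) → Fin 2) (h : ℕ)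
    {c c' : Fin 2} (hcc : c ≠ c') (p q : V)
    (hX : 2*h+1 ≤ (st n C h c p q).card) (hZ : 2*h+1 ≤ (st n C h c' q p).card) :
    False := by
  classical
  set X := st n C h c p q with hXdef
  set Z := st n C h c' q p with hZdef
  have bound1 : ∀ y ∈ X, (Z.filter fun z => ¬ C s((p,y),(q,z)) = c).card ≤ h - 1 := by
    intro y hy
    have hsub : (Z.filter fun z => ¬ C s((p,y),(q,z)) = c)
        ⊆ (univ.filter fun z : Fin n => ¬ C s((p,y),(q,z)) = c) := by
      intro z hz; simp only [mem_filter, mem_univ, true_and] at *; exact hz.2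
    have hcard := card_le_card hsub
    have hcompl : dg n C c p q y
        + (univ.filter fun z : Fin n => ¬ C s((p,y),(q,z)) = c).card = n := by
      have := Finset.card_filter_add_card_filter_not
        (s := (univ : Finset (Fin n))) (p := fun z => C s((p,y),(q,z)) = c)
      simpa [dg] using this
    have hst : n < h + dg n C c p q y := mem_st.1 hy
    omega
  have bound2 : ∀ z ∈ Z, (X.filter fun y => C s((p,y),(q,z)) = c).card ≤ h - 1 := by
    intro z hz
    have hsub : (X.filter fun y => C s((p,y),(q,z)) = c)
        ⊆ (univ.filter fun y : Fin n => C s((q,z),(p,y)) = c) := by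
      intro y hy; simp only [mem_filter, mem_univ, true_and] at *
      rw [Sym2.eq_swap] at hy; exact hy.2
    have hcard := card_le_card hsub
    have hdg : (univ.filter fun y : Fin n => C s((q,z),(p,y)) = c).card
        = dg n C c q p z := rfl
    have hadd := dg_add n C hcc q p z
    have hst : n < h + dg n C c' q p z := mem_st.1 hz
    omega
  have exch : ∑ y ∈ X, (Z.filter fun z => C s((p,y),(q,z)) = c).card
      = ∑ z ∈ Z, (X.filter fun y => C s((p,y),(q,z)) = c).card := by
    simp only [card_filter]
    exact Finset.sum_comm
  have key : X.card * Z.card ≤ (h-1) * X.card + (h-1) * Z.card := by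
    calc X.card * Z.card = ∑ _y ∈ X, Z.card := by rw [sum_const, smul_eq_mul, mul_comm]
      _ = ∑ y ∈ X, ((Z.filter fun z => C s((p,y),(q,z)) = c).card
            + (Z.filter fun z => ¬ C s((p,y),(q,z)) = c).card) := by
          apply Finset.sum_congr rfl; intro y _
          exact (Finset.card_filter_add_card_filter_not _).symm
      _ = (∑ y ∈ X, (Z.filter fun z => C s((p,y),(q,z)) = c).card)
            + ∑ y ∈ X, (Z.filter fun z => ¬ C s((p,y),(q,z)) = c).card := by
          rw [Finset.sum_add_distrib]
      _ ≤ (∑ z ∈ Z, (X.filter fun y => C s((p,y),(q,z)) = c).card) + (h-1) * X.card := by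
          rw [exch]
          refine Nat.add_le_add_left ?_ _
          calc ∑ y ∈ X, (Z.filter fun z => ¬ C s((p,y),(q,z)) = c).card
              ≤ X.card * (h-1) := by
                have := Finset.sum_le_card_nsmul X _ (h-1) bound1
                simpa using this
            _ = (h-1) * X.card := Nat.mul_comm _ _
      _ ≤ Z.card * (h-1) + (h-1) * X.card := by
          refine Nat.add_le_add_right ?_ _
          have := Finset.sum_le_card_nsmul Z _ (h-1) bound2
          simpa using this
      _ = (h-1) * X.card + (h-1) * Z.card := by ring
  have a1 : (2*h+1) * Z.card ≤ X.card * Z.card := Nat.mul_le_mul_right _ hX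
  have a2 : (2*h+1) * X.card ≤ X.card * Z.card := by
    calc (2*h+1) * X.card ≤ Z.card * X.card := Nat.mul_le_mul_right _ hZ
      _ = X.card * Z.card := Nat.mul_comm _ _
  have t1 : (2*h+1) * (X.card + Z.card) ≤ 2 * (X.card * Z.card) := by
    rw [Nat.mul_add]; omega
  have t2 : 2 * (X.card * Z.card) ≤ (2*(h-1)) * (X.card + Z.card) := by
    calc 2 * (X.card * Z.card) ≤ 2 * ((h-1) * X.card + (h-1) * Z.card) :=
          Nat.mul_le_mul_left _ key
      _ = (2*(h-1)) * (X.card + Z.card) := by ring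
  have hpos : 0 < X.card + Z.card := by omega
  have : 2*h+1 ≤ 2*(h-1) :=
    Nat.le_of_mul_le_mul_right (le_trans t1 t2) hpos
  omega

lemma greedy (n t : ℕ) (C : Sym2 (V × Fin n) → Fin 2) (v a : V) (c : Fin 2) (h : ℕ)
    (harith : ∀ k, k < t → n + 1 + 16*k ≤ 16*h) (htn : t ≤ n) :
    ∀ k, k ≤ t → ∀ Y : Finset (Fin n), (∀ y ∈ Y, h ≤ dg n C c v a y) →
    ∃ (A Y' : Finset (Fin n)), A.card = k ∧ Y' ⊆ Y ∧
      (∀ y ∈ Y', ∀ i ∈ A, C s((v,y),(a,i)) = c) ∧ Y.card ≤ 16^k * Y'.card := by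
  classical
  intro k
  induction k with
  | zero =>
    intro _ Y _
    exact ⟨∅, Y, by simp, Finset.Subset.refl _, by simp, by simp⟩
  | succ k ih =>
    intro hk Y hdeg
    obtain ⟨A, Y', hA, hsub, hcol, hcard⟩ := ih (by omega) Y hdeg
    have hklt : k < t := by omega
    have hAuniv : A ⊆ (univ : Finset (Fin n)) := subset_univ _
    have hsd : (univ \ A).Nonempty := by
      rw [← Finset.card_pos, Finset.card_sdiff_of_subset hAuniv]
      simp only [card_univ, Fintype.card_fin]
      omega
    by_cases hY0 : Y'.card = 0
    · obtain ⟨i₀, hi₀⟩ := hsd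
      have hi₀A : i₀ ∉ A := (Finset.mem_sdiff.1 hi₀).2
      refine ⟨insert i₀ A, ∅, ?_, by simp, by simp, ?_⟩
      · rw [Finset.card_insert_of_notMem hi₀A, hA]
      · have : Y.card = 0 := by
          have := hcard; rw [hY0] at this; omega
        omega
    · have claim : ∃ i₀ ∈ univ \ A,
          Y'.card ≤ 16 * (Y'.filter fun y => C s((v,y),(a,i₀)) = c).card := by
        by_contra hcon
        push_neg at hcon
        set S := ∑ i ∈ univ \ A, (Y'.filter fun y => C s((v,y),(a,i)) = c).card with hS
        have hexch : S = ∑ y ∈ Y', ((univ \ A).filter fun i => C s((v,y),(a,i)) = c).card := by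
          rw [hS]; simp only [card_filter]; exact Finset.sum_comm
        have hlow : ∀ y ∈ Y', h - k ≤ ((univ \ A).filter fun i => C s((v,y),(a,i)) = c).card := by
          intro y hy
          have heq : ((univ \ A).filter fun i => C s((v,y),(a,i)) = c)
              = (univ.filter fun i : Fin n => C s((v,y),(a,i)) = c) \ A := by
            ext i; simp only [mem_filter, mem_sdiff, mem_univ, true_and]; tauto
          rw [heq]
          have h1 := Finset.le_card_sdiff A (univ.filter fun i : Fin n => C s((v,y),(a,i)) = c)
          have hd : (univ.filter fun i : Fin n => C s((v,y),(a,i)) = c).card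
              = dg n C c v a y := rfl
          have h2 := hdeg y (hsub hy)
          omega
        have hlow2 : Y'.card * (h - k) ≤ S := by
          rw [hexch]
          calc Y'.card * (h-k) = ∑ _y ∈ Y', (h-k) := by rw [sum_const, smul_eq_mul]
            _ ≤ _ := Finset.sum_le_sum hlow
        have hup : 16 * S ≤ n * (Y'.card - 1) := by
          rw [hS, Finset.mul_sum]
          calc ∑ i ∈ univ \ A, 16 * (Y'.filter fun y => C s((v,y),(a,i)) = c).card
              ≤ ∑ _i ∈ univ \ A, (Y'.card - 1) := by
                apply Finset.sum_le_sum
                intro i hi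
                have := hcon i hi
                omega
            _ = (univ \ A).card * (Y'.card - 1) := by rw [sum_const, smul_eq_mul]
            _ ≤ n * (Y'.card - 1) := by
                apply Nat.mul_le_mul_right
                calc (univ \ A).card ≤ (univ : Finset (Fin n)).card := card_le_card sdiff_subset
                  _ = n := by simp
        have harith' := harith k hklt
        have hstep : (n+1) * Y'.card ≤ (16 * (h - k)) * Y'.card := by
          apply Nat.mul_le_mul_right
          omega
        have hchain : (16 * (h - k)) * Y'.card ≤ 16 * S := by
          calc (16 * (h-k)) * Y'.card = 16 * (Y'.card * (h-k)) := by ring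
            _ ≤ 16 * S := Nat.mul_le_mul_left _ hlow2
        have hfin : (n+1) * Y'.card ≤ n * (Y'.card - 1) := le_trans (le_trans hstep hchain) hup
        have h2 : n * (Y'.card - 1) ≤ n * Y'.card := Nat.mul_le_mul_left _ (by omega)
        have h3 : Y'.card * (n+1) ≤ Y'.card * n := by
          calc Y'.card * (n+1) = (n+1) * Y'.card := Nat.mul_comm _ _
            _ ≤ n * Y'.card := le_trans hfin h2
            _ = Y'.card * n := Nat.mul_comm _ _
        have := Nat.le_of_mul_le_mul_left h3 (by omega)
        omega
      obtain ⟨i₀, hi₀, hbig⟩ := claim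
      have hi₀A : i₀ ∉ A := (Finset.mem_sdiff.1 hi₀).2
      refine ⟨insert i₀ A, Y'.filter fun y => C s((v,y),(a,i₀)) = c, ?_, ?_, ?_, ?_⟩
      · rw [Finset.card_insert_of_notMem hi₀A, hA]
      · exact (Finset.filter_subset _ _).trans hsub
      · intro y hy i hi
        rcases Finset.mem_insert.1 hi with rfl | hiA
        · exact (Finset.mem_filter.1 hy).2
        · exact hcol y (Finset.mem_filter.1 hy).1 i hiA
      · calc Y.card ≤ 16^k * Y'.card := hcard
          _ ≤ 16^k * (16 * (Y'.filter fun y => C s((v,y),(a,i₀)) = c).card) :=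
              Nat.mul_le_mul_left _ hbig
          _ = 16^(k+1) * (Y'.filter fun y => C s((v,y),(a,i₀)) = c).card := by ring

noncomputable def enum {n t : ℕ} (X : Finset (Fin n)) (hX : X.card = t) : Fin t → Fin n :=
  fun i => (X.orderIsoOfFin hX i : Fin n)

lemma enum_inj {n t : ℕ} (X : Finset (Fin n)) (hX : X.card = t) :
    Function.Injective (enum X hX) := fun i j hij => by
  have := Subtype.ext (p := fun x => x ∈ X) hij
  exact (X.orderIsoOfFin hX).injective this

lemma enum_mem {n t : ℕ} (X : Finset (Fin n)) (hX : X.card = t) (i : Fin t) :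
    enum X hX i ∈ X := (X.orderIsoOfFin hX i).2

lemma build (n t : ℕ) (G : SimpleGraph V) (C : Sym2 (V × Fin n) → Fin 2)
    (a v b : V) (c : Fin 2) (hva : G.Adj v a) (hvb : G.Adj v b) (hab : a ≠ b)
    (S A B : Finset (Fin n)) (hS : S.card = t) (hA : A.card = t) (hB : B.card = t)
    (hca : ∀ y ∈ S, ∀ i ∈ A, C s((v,y),(a,i)) = c)
    (hcb : ∀ y ∈ S, ∀ i ∈ B, C s((v,y),(b,i)) = c) :
    HasMonoCanonicalBlowup G (SimpleGraph.pathGraph 3) n t 2 C := by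
  classical
  refine ⟨(fun x : Fin 3 => if x = 0 then a else if x = 1 then v else b),
    (fun x : Fin 3 => if x = 0 then enum A hA else if x = 1 then enum S hS else enum B hB),
    c, ?_, ?_, ?_⟩
  · intro x y hxy
    have hvane : v ≠ a := G.ne_of_adj hva
    have hvbne : v ≠ b := G.ne_of_adj hvb
    fin_cases x <;> fin_cases y <;> simp_all
  · intro x
    fin_cases x
    · simpa using enum_inj A hA
    · simpa using enum_inj S hS
    · simpa using enum_inj B hB
  · intro x y hxy
    have hc := SimpleGraph.pathGraph_adj.1 hxy
    have hcases : (x = 0 ∧ y = 1) ∨ (x = 1 ∧ y = 0) ∨ (x = 1 ∧ y = 2) ∨ (x = 2 ∧ y = 1) := by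
      omega
    rcases hcases with ⟨rfl, rfl⟩ | ⟨rfl, rfl⟩ | ⟨rfl, rfl⟩ | ⟨rfl, rfl⟩
    · refine ⟨by simpa using hva.symm, ?_⟩
      intro i j
      simp only [reduceIte]
      rw [Sym2.eq_swap]
      exact hca _ (enum_mem S hS j) _ (enum_mem A hA i)
    · refine ⟨by simpa using hva, ?_⟩
      intro i j
      simp only [reduceIte]
      exact hca _ (enum_mem S hS i) _ (enum_mem A hA j)
    · refine ⟨by simpa using hvb, ?_⟩
      intro i j
      simp only [reduceIte]
      exact hcb _ (enum_mem S hS i) _ (enum_mem B hB j)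
    · refine ⟨by simpa using hvb.symm, ?_⟩
      intro i j
      simp only [reduceIte]
      rw [Sym2.eq_swap]
      exact hcb _ (enum_mem S hS j) _ (enum_mem B hB i)

lemma mono_of_bad (n t : ℕ) (G : SimpleGraph V) (C : Sym2 (V × Fin n) → Fin 2)
    (v a b : V) (hva : G.Adj v a) (hvb : G.Adj v b) (hab : a ≠ b) (c : Fin 2) (h : ℕ)
    (harith : ∀ k, k < t → n + 1 + 16*k ≤ 16*h) (htn : t ≤ n)
    (hbad : t * (16^t * 16^t) ≤ (bd n C h c v a b).card) :
    HasMonoCanonicalBlowup G (SimpleGraph.pathGraph 3) n t 2 C := by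
  classical
  have hpow : 0 < 16^t := by positivity
  obtain ⟨A, Y₁, hAc, hY₁sub, hcol1, hcard1⟩ :=
    greedy n t C v a c h harith htn t le_rfl (bd n C h c v a b)
      (fun y hy => (mem_bd.1 hy).1)
  have hY₁ : t * 16^t ≤ Y₁.card := by
    have : 16^t * (t * 16^t) ≤ 16^t * Y₁.card := by
      calc 16^t * (t * 16^t) = t * (16^t * 16^t) := by ring
        _ ≤ (bd n C h c v a b).card := hbad
        _ ≤ 16^t * Y₁.card := hcard1
    exact Nat.le_of_mul_le_mul_left this hpow
  obtain ⟨B, Y₂, hBc, hY₂sub, hcol2, hcard2⟩ :=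
    greedy n t C v b c h harith htn t le_rfl Y₁
      (fun y hy => (mem_bd.1 (hY₁sub hy)).2)
  have hY₂ : t ≤ Y₂.card := by
    have : 16^t * t ≤ 16^t * Y₂.card := by
      calc 16^t * t = t * 16^t := Nat.mul_comm _ _
        _ ≤ Y₁.card := hY₁
        _ ≤ 16^t * Y₂.card := hcard2
    exact Nat.le_of_mul_le_mul_left this hpow
  obtain ⟨S, hSsub, hScard⟩ := Finset.exists_subset_card_eq hY₂
  exact build n t G C a v b c hva hvb hab S A B hScard hAc hBc
    (fun y hy i hi => hcol1 y (hY₂sub (hSsub hy)) i hi)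
    (fun y hy i hi => hcol2 y (hSsub hy) i hi)

lemma coverage (n : ℕ) (C : Sym2 (V × Fin n) → Fin 2) (h : ℕ) (h2h : 2*h ≤ n)
    (v a b : V) :
    n ≤ (st n C h 0 v a).card + ((st n C h 1 v a).card
      + ((bd n C h 0 v a b).card + (bd n C h 1 v a b).card)) := by
  classical
  have hsub : (univ : Finset (Fin n)) ⊆
      st n C h 0 v a ∪ (st n C h 1 v a ∪ (bd n C h 0 v a b ∪ bd n C h 1 v a b)) := by
    intro y _
    simp only [mem_union, mem_st, mem_bd]
    have e1 := dg_add n C (show (0:Fin 2) ≠ 1 by decide) v a y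
    have e2 := dg_add n C (show (0:Fin 2) ≠ 1 by decide) v b y
    omega
  calc n = (univ : Finset (Fin n)).card := by simp
    _ ≤ _ := card_le_card hsub
    _ ≤ _ := by
        refine le_trans (card_union_le _ _) (Nat.add_le_add_left ?_ _)
        exact le_trans (card_union_le _ _) (Nat.add_le_add_left (card_union_le _ _) _)

lemma cross (n : ℕ) (C : Sym2 (V × Fin n) → Fin 2) (h : ℕ) (h2h : 2*h ≤ n)
    {c c' : Fin 2} (hcc : c ≠ c') (v a b : V) :
    (st n C h c v a).card ≤ (st n C h c' v b).card + (bd n C h c v a b).card := by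
  classical
  have hsub : st n C h c v a ⊆ st n C h c' v b ∪ bd n C h c v a b := by
    intro y hy
    simp only [mem_union, mem_st, mem_bd] at *
    have e1 := dg_add n C hcc v a y
    have e2 := dg_add n C hcc v b y
    omega
  exact le_trans (card_le_card hsub) (card_union_le _ _)

lemma k13 (n : ℕ) (C : Sym2 (V × Fin n) → Fin 2) (h : ℕ) (h2h : 2*h ≤ n)
    (v u1 u2 u3 : V) :
    n ≤ (bd n C h 0 v u1 u2).card + ((bd n C h 0 v u1 u3).card + ((bd n C h 0 v u2 u3).card
      + ((bd n C h 1 v u1 u2).card + ((bd n C h 1 v u1 u3).card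
      + (bd n C h 1 v u2 u3).card)))) := by
  classical
  have hsub : (univ : Finset (Fin n)) ⊆
      bd n C h 0 v u1 u2 ∪ (bd n C h 0 v u1 u3 ∪ (bd n C h 0 v u2 u3
        ∪ (bd n C h 1 v u1 u2 ∪ (bd n C h 1 v u1 u3 ∪ bd n C h 1 v u2 u3)))) := by
    intro y _
    simp only [mem_union, mem_bd]
    have e1 := dg_add n C (show (0:Fin 2) ≠ 1 by decide) v u1 y
    have e2 := dg_add n C (show (0:Fin 2) ≠ 1 by decide) v u2 y
    have e3 := dg_add n C (show (0:Fin 2) ≠ 1 by decide) v u3 y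
    omega
  calc n = (univ : Finset (Fin n)).card := by simp
    _ ≤ _ := card_le_card hsub
    _ ≤ _ := by
        refine le_trans (card_union_le _ _) (Nat.add_le_add_left ?_ _)
        refine le_trans (card_union_le _ _) (Nat.add_le_add_left ?_ _)
        refine le_trans (card_union_le _ _) (Nat.add_le_add_left ?_ _)
        refine le_trans (card_union_le _ _) (Nat.add_le_add_left ?_ _)
        exact card_union_le _ _


section Chi
open scoped Classical

variable {V : Type} [Fintype V]

def Ctr (G : SimpleGraph V) (v : V) : Prop :=
  (∃ x y, G.Adj v x ∧ G.Adj v y ∧ x ≠ y) ∧ ∀ w, G.Adj v w → ∀ z, G.Adj w z → z = v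

noncomputable def pf (G : SimpleGraph V) [LinearOrder V] (v u : V) : Fin 2 :=
  if hne : (G.neighborFinset v).Nonempty then
    (if u = (G.neighborFinset v).min' hne then 0 else 1) else 0

noncomputable def bits' (n : ℕ) (C : Sym2 (V × Fin n) → Fin 2) (h q' : ℕ) (u v : V) :
    Fin 2 :=
  if q' ≤ (st n C h 0 u v).card ∨ q' ≤ (st n C h 0 v u).card then 0 else 1

noncomputable def chi0 (G : SimpleGraph V) [LinearOrder V] (n : ℕ)
    (C : Sym2 (V × Fin n) → Fin 2) (h q' : ℕ) (u v : V) : Fin 2 :=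
  if G.Adj u v then
    (if Ctr G u then (if Ctr G v then 0 else pf G u v)
     else if Ctr G v then pf G v u else bits' n C h q' u v)
  else 0

lemma bits'_symm (n : ℕ) (C : Sym2 (V × Fin n) → Fin 2) (h q' : ℕ) (u v : V) :
    bits' n C h q' u v = bits' n C h q' v u := by
  unfold bits'
  by_cases hx : q' ≤ (st n C h 0 u v).card ∨ q' ≤ (st n C h 0 v u).card
  · rw [if_pos hx, if_pos (Or.symm hx)]
  · rw [if_neg hx, if_neg (fun hc => hx (Or.symm hc))]

lemma chi0_symm (G : SimpleGraph V) [LinearOrder V] (n : ℕ)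
    (C : Sym2 (V × Fin n) → Fin 2) (h q' : ℕ) (u v : V) :
    chi0 G n C h q' u v = chi0 G n C h q' v u := by
  unfold chi0
  by_cases hadj : G.Adj u v
  · rw [if_pos hadj, if_pos hadj.symm]
    by_cases hu : Ctr G u <;> by_cases hv : Ctr G v
    · simp only [if_pos hu, if_pos hv]
    · simp only [if_pos hu, if_neg hv]
    · simp only [if_neg hu, if_pos hv]
    · simp only [if_neg hu, if_neg hv]
      exact bits'_symm n C h q' u v
  · rw [if_neg hadj, if_neg (fun hc => hadj hc.symm)]

end Chi

lemma main (V : Type) [Fintype V] (G : SimpleGraph V)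
    (harr : ArrowsFor G (SimpleGraph.pathGraph 3) 2) (t : ℕ) (ht : 1 ≤ t) :
    BlowupArrow G (SimpleGraph.pathGraph 3) 2 (100 * (t * (16^t * 16^t))) t := by
  classical
  set K := t * (16^t * 16^t) with hK
  set N := 100 * K with hN
  intro C
  by_contra hno
  have h256 : 256 ≤ 16^t * 16^t := by
    have h16 : (16:ℕ) ≤ 16^t := by
      calc (16:ℕ) = 16^1 := (pow_one 16).symm
        _ ≤ 16^t := Nat.pow_le_pow_right (by norm_num) ht
    calc (256:ℕ) = 16*16 := by norm_num
      _ ≤ 16^t * 16^t := Nat.mul_le_mul h16 h16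
  have hK256 : 256 * t ≤ K := by
    rw [hK]
    calc 256 * t = t * 256 := Nat.mul_comm _ _
      _ ≤ t * (16^t*16^t) := Nat.mul_le_mul_left _ h256
  have htK : t ≤ K := by
    rw [hK]
    calc t = t * 1 := (Nat.mul_one t).symm
      _ ≤ t * (16^t*16^t) := Nat.mul_le_mul_left _ (by omega)
  set h := N / 10 + 1 with hh
  have hdiv : N / 10 = 10 * K := by omega
  have harith : ∀ k, k < t → N + 1 + 16*k ≤ 16*h := by
    intro k hk; omega
  have h2h : 2*h ≤ N := by omega
  have htn : t ≤ N := by omega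
  set q' := 2*h + 1 + 2*K with hq'
  set q'' := 2*h + 1 + K with hq''
  have F1 : ∀ (v a b : V) (c : Fin 2), G.Adj v a → G.Adj v b → a ≠ b →
      (bd N C h c v a b).card < K := by
    intro v a b c hva hvb hab
    by_contra hge
    push_neg at hge
    rw [hK] at hge
    exact hno (mono_of_bad N t G C v a b hva hvb hab c h harith htn hge)
  have cover' : ∀ (v a b : V), G.Adj v a → G.Adj v b → a ≠ b →
      N ≤ (st N C h 0 v a).card + (st N C h 1 v a).card + 2*K := by
    intro v a b hva hvb hab
    have hc := coverage N C h h2h v a b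
    have b0 := F1 v a b 0 hva hvb hab
    have b1 := F1 v a b 1 hva hvb hab
    omega
  have cross' : ∀ (v a b : V), G.Adj v a → G.Adj v b → a ≠ b →
      ∀ (c c' : Fin 2), c ≠ c' → (st N C h c v a).card ≤ (st N C h c' v b).card + K := by
    intro v a b hva hvb hab c c' hcc
    have hc := cross N C h h2h hcc v a b
    have b0 := F1 v a b c hva hvb hab
    omega
  have k13' : ∀ (v u1 u2 u3 : V), G.Adj v u1 → G.Adj v u2 → G.Adj v u3 →
      u1 ≠ u2 → u1 ≠ u3 → u2 ≠ u3 → False := by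
    intro v u1 u2 u3 h1 h2 h3 d12 d13 d23
    have hc := k13 N C h h2h v u1 u2 u3
    have b1 := F1 v u1 u2 0 h1 h2 d12
    have b2 := F1 v u1 u3 0 h1 h3 d13
    have b3 := F1 v u2 u3 0 h2 h3 d23
    have b4 := F1 v u1 u2 1 h1 h2 d12
    have b5 := F1 v u1 u3 1 h1 h3 d13
    have b6 := F1 v u2 u3 1 h2 h3 d23
    omega
  letI : LinearOrder V := LinearOrder.lift' (fun v => (Fintype.equivFin V) v)
    (fun x y hxy => (Fintype.equivFin V).injective hxy)
  obtain ⟨φf, cc, hinjf, hpf⟩ := harr (Sym2.lift ⟨chi0 G N C h q', chi0_symm G N C h q'⟩)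
  have h01 := hpf 0 1 (by rw [SimpleGraph.pathGraph_adj]; omega)
  have h12 := hpf 1 2 (by rw [SimpleGraph.pathGraph_adj]; omega)
  set a := φf 0 with ha
  set v := φf 1 with hvv
  set b := φf 2 with hb
  have hA1 : G.Adj a v := h01.1
  have hA2 : G.Adj v b := h12.1
  have hab : a ≠ b := by
    intro hcc2
    exact absurd (hinjf hcc2) (by decide)
  have hc1 : chi0 G N C h q' a v = cc := by simpa using h01.2
  have hc2 : chi0 G N C h q' v b = cc := by simpa using h12.2
  have hdeg2 : ∀ w, G.Adj v w → w = a ∨ w = b := by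
    intro w hw
    by_contra hcon
    push_neg at hcon
    exact k13' v a b w hA1.symm hA2 hw hab (Ne.symm hcon.1) (Ne.symm hcon.2)
  have hnCa : ¬ Ctr G a := by
    intro hCa
    exact hab (hCa.2 v hA1 b hA2).symm
  have hnCb : ¬ Ctr G b := by
    intro hCb
    exact hab (hCb.2 v hA2.symm a hA1.symm)
  by_cases hCv : Ctr G v
  · -- v is a P3-center: the two edge colors disagree by the pairing rule
    have hne : (G.neighborFinset v).Nonempty :=
      ⟨a, by simpa [SimpleGraph.mem_neighborFinset] using hA1.symm⟩
    have hval1 : chi0 G N C h q' a v = pf G v a := by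
      unfold chi0
      simp only [if_pos hA1, if_neg hnCa, if_pos hCv]
    have hval2 : chi0 G N C h q' v b = pf G v b := by
      unfold chi0
      simp only [if_pos hA2, if_pos hCv, if_neg hnCb]
    set m := (G.neighborFinset v).min' hne with hm
    have hmadj : G.Adj v m := by
      have := Finset.min'_mem (G.neighborFinset v) hne
      rwa [SimpleGraph.mem_neighborFinset] at this
    have hfa : pf G v a = if a = m then 0 else 1 := by
      unfold pf; rw [dif_pos hne]
    have hfb : pf G v b = if b = m then 0 else 1 := by
      unfold pf; rw [dif_pos hne]
    rcases hdeg2 m hmadj with hma | hmb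
    · have e1 : pf G v a = 0 := by rw [hfa, if_pos hma.symm]
      have e2 : pf G v b = 1 := by
        rw [hfb, if_neg (fun hc => hab ((hc.trans hma).symm))]
      rw [hval1, e1] at hc1
      rw [hval2, e2] at hc2
      rw [← hc1] at hc2
      exact absurd hc2 (by decide)
    · have e1 : pf G v a = 1 := by
        rw [hfa, if_neg (fun hc => hab (hc.trans hmb))]
      have e2 : pf G v b = 0 := by rw [hfb, if_pos hmb.symm]
      rw [hval1, e1] at hc1
      rw [hval2, e2] at hc2
      rw [← hc1] at hc2
      exact absurd hc2 (by decide)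
  · -- v not a center: bit rule on both edges
    have hval1 : chi0 G N C h q' a v = bits' N C h q' a v := by
      unfold chi0
      simp only [if_pos hA1, if_neg hnCa, if_neg hCv]
    have hval2 : chi0 G N C h q' v b = bits' N C h q' v b := by
      unfold chi0
      simp only [if_pos hA2, if_neg hCv, if_neg hnCb]
    have F6 : q'' ≤ (st N C h 0 v b).card → q'' ≤ (st N C h 1 v b).card → False := by
      intro m0 m1
      have c0 : (st N C h 0 v b).card ≤ (st N C h 1 v a).card + K :=
        cross' v b a hA2 hA1.symm (Ne.symm hab) 0 1 (by decide)
      have c1 : (st N C h 1 v b).card ≤ (st N C h 0 v a).card + K :=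
        cross' v b a hA2 hA1.symm (Ne.symm hab) 1 0 (by decide)
      have s1a : 2*h+1 ≤ (st N C h 1 v a).card := by omega
      have s0a : 2*h+1 ≤ (st N C h 0 v a).card := by omega
      have hleafa : ∀ z, G.Adj a z → z = v := by
        intro z hz
        by_contra hzv
        have e0 : ¬ (2*h+1 ≤ (st N C h 1 a v).card) := fun hcon =>
          Efact N C h (show (0:Fin 2) ≠ 1 by decide) v a s0a hcon
        have e1 : ¬ (2*h+1 ≤ (st N C h 0 a v).card) := fun hcon =>
          Efact N C h (show (1:Fin 2) ≠ 0 by decide) v a s1a hcon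
        have hcov := cover' a v z hA1 hz (fun he => hzv he.symm)
        omega
      have s0b : 2*h+1 ≤ (st N C h 0 v b).card := by omega
      have s1b : 2*h+1 ≤ (st N C h 1 v b).card := by omega
      have hleafb : ∀ z, G.Adj b z → z = v := by
        intro z hz
        by_contra hzv
        have e0 : ¬ (2*h+1 ≤ (st N C h 1 b v).card) := fun hcon =>
          Efact N C h (show (0:Fin 2) ≠ 1 by decide) v b s0b hcon
        have e1 : ¬ (2*h+1 ≤ (st N C h 0 b v).card) := fun hcon =>
          Efact N C h (show (1:Fin 2) ≠ 0 by decide) v b s1b hcon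
        have hcov := cover' b v z hA2.symm hz (fun he => hzv he.symm)
        omega
      apply hCv
      refine ⟨⟨a, b, hA1.symm, hA2, hab⟩, ?_⟩
      intro w hw z hz
      rcases hdeg2 w hw with rfl | rfl
      · exact hleafa z hz
      · exact hleafb z hz
    by_cases hcond1 : q' ≤ (st N C h 0 a v).card ∨ q' ≤ (st N C h 0 v a).card
    · have hb1 : bits' N C h q' a v = 0 := by
        unfold bits'; rw [if_pos hcond1]
      have hccv : cc = 0 := by rw [← hc1, hval1, hb1]
      have hs0va : q' ≤ (st N C h 0 v a).card := by
        rcases hcond1 with hca | hca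
        · have hs1 : ¬(2*h+1 ≤ (st N C h 1 v a).card) := fun hcon =>
            Efact N C h (show (0:Fin 2) ≠ 1 by decide) a v (by omega) hcon
          have hcov := cover' v a b hA1.symm hA2 hab
          omega
        · exact hca
      have hs1vb : q'' ≤ (st N C h 1 v b).card := by
        have := cross' v a b hA1.symm hA2 hab 0 1 (by decide)
        omega
      have hs0vb : ¬ q'' ≤ (st N C h 0 v b).card := fun hcon => F6 hcon hs1vb
      have hb2 : bits' N C h q' v b = 0 := by rw [← hccv, ← hc2, hval2]
      unfold bits' at hb2
      by_cases hcond2 : q' ≤ (st N C h 0 v b).card ∨ q' ≤ (st N C h 0 b v).card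
      · rcases hcond2 with hx | hx
        · exact hs0vb (by omega)
        · exact Efact N C h (show (0:Fin 2) ≠ 1 by decide) b v (by omega) (by omega)
      · rw [if_neg hcond2] at hb2
        exact absurd hb2 (by decide)
    · have hb1 : bits' N C h q' a v = 1 := by
        unfold bits'; rw [if_neg hcond1]
      have hccv : cc = 1 := by rw [← hc1, hval1, hb1]
      push_neg at hcond1
      have hcov := cover' v a b hA1.symm hA2 hab
      have hcr := cross' v a b hA1.symm hA2 hab 1 0 (by decide)
      have hs0vb : q' ≤ (st N C h 0 v b).card := by omega
      have hb2 : bits' N C h q' v b = 1 := by rw [← hccv, ← hc2, hval2]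
      unfold bits' at hb2
      rw [if_pos (Or.inl hs0vb)] at hb2
      exact absurd hb2 (by decide)

end BRP


/-- There is an absolute constant `c > 1` such that for every graph `G` with
`G →₂ P₃` and every positive integer `t`, `B₂(G → P₃; t) ≤ c^t`. -/
theorem blowup_ramsey_path_three_uniform :
    ∃ c : ℝ, 1 < c ∧ ∀ (V : Type) [Fintype V] (G : SimpleGraph V),
      ArrowsFor G (SimpleGraph.pathGraph 3) 2 →
      ∀ t : ℕ, 1 ≤ t → ∃ n : ℕ, (n : ℝ) ≤ c ^ t ∧
        BlowupArrow G (SimpleGraph.pathGraph 3) 2 n t := by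
  refine ⟨32768, by norm_num, ?_⟩
  intro V _ G harr t ht
  refine ⟨100 * (t * (16^t * 16^t)), ?_, BRP.main V G harr t ht⟩
  have hnat : 100 * (t * (16^t * 16^t)) ≤ 32768^t := by
    have h1 : (16:ℕ)^t * 16^t = 256^t := by
      rw [← Nat.mul_pow]
    have h2 : ∀ s : ℕ, 100 * s ≤ 128^s := by
      intro s
      induction s with
      | zero => norm_num
      | succ m ih =>
        have hpow : (1:ℕ) ≤ 128^m := Nat.one_le_pow _ _ (by norm_num)
        have h100 : (100:ℕ) ≤ 100 * 128^m := by
          calc (100:ℕ) = 100 * 1 := by norm_num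
            _ ≤ 100 * 128^m := Nat.mul_le_mul_left _ hpow
        calc 100 * (m+1) = 100*m + 100 := by ring
          _ ≤ 128^m + 100 * 128^m := Nat.add_le_add ih h100
          _ = 101 * 128^m := by ring
          _ ≤ 128 * 128^m := Nat.mul_le_mul_right _ (by norm_num)
          _ = 128^(m+1) := by ring
    calc 100 * (t * (16^t * 16^t)) = (100 * t) * (16^t*16^t) := by ring
      _ = (100*t) * 256^t := by rw [h1]
      _ ≤ 128^t * 256^t := Nat.mul_le_mul_right _ (h2 t)
      _ = 32768^t := by rw [← Nat.mul_pow]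
  calc ((100 * (t * (16^t * 16^t)) : ℕ) : ℝ) ≤ ((32768^t : ℕ) : ℝ) := by
        exact_mod_cast hnat
    _ = (32768:ℝ)^t := by push_cast; ring
end

section
/- Let G and H be graphs, with H having at least one edge, and r ≥ 1 an integer. Then the following are equivalent: (i) G →_r H; (ii) for every positive integer t there exists n such that every r-coloring of the edges of G[n] contains a monochromatic canonical copy of H[t]. Moreover, if G ↛_r H, then for every n and every t there exists an r-coloring of the edges of G[n] with no monochromatic canonical copy of H[t]. -/
/-!
If a colouring of `G` has no monochromatic `H`, colouring each edge of `G[n]` like its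
projection to `G` leaves no monochromatic canonical `H[t]` either. Conversely, applying bipartite
Ramsey once for each ordered pair of distinct vertices of `G` shrinks every part of `G[n]` to `t`
vertices between any two of which the colouring is constant; these constants colour `G`, and the
blowup of a monochromatic copy of `H` in that colouring is a monochromatic canonical `H[t]`.
-/

open Finset

section BipartiteRamsey

variable {β γ κ : Type*} [Fintype κ] [Nonempty κ]

theorem exists_le_card_filter_eq_of_card_mul_le [DecidableEq κ] (f : β → κ) {s : Finset β} {n : ℕ}
    (h : Fintype.card κ * n ≤ #s) : ∃ y, n ≤ #{x ∈ s | f x = y} := by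
  obtain ⟨y, -, hy⟩ := exists_le_card_fiber_of_mul_le_card_of_maps_to
    (fun _ _ => mem_univ _) univ_nonempty (by simpa using h)
  exact ⟨y, hy⟩

/-- Passing to a colour class of the edges at each `a ∈ A` in turn costs a factor `card κ`
per vertex. -/
theorem exists_subset_forall_mem_color_eq (c : β → γ → κ) (k : ℕ) (A : Finset β) :
    ∀ B : Finset γ, k * Fintype.card κ ^ #A ≤ #B →
      ∃ B' ⊆ B, k ≤ #B' ∧ ∃ g : β → κ, ∀ a ∈ A, ∀ b ∈ B', c a b = g a := by
  classical
  induction A using Finset.induction_on with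
  | empty =>
    intro B hB
    exact ⟨B, subset_rfl, by simpa using hB, fun _ => Classical.arbitrary κ, by simp⟩
  | insert a A ha ih =>
    intro B hB
    have hB : Fintype.card κ * (k * Fintype.card κ ^ #A) ≤ #B := by
      convert hB using 1
      rw [card_insert_of_notMem ha, pow_succ]
      ring
    obtain ⟨x, hx⟩ := exists_le_card_filter_eq_of_card_mul_le (c a) hB
    obtain ⟨B', hB', hk, g, hg⟩ := ih _ hx
    refine ⟨B', hB'.trans (filter_subset _ _), hk, Function.update g a x, ?_⟩
    intro a' ha' b hb
    rcases mem_insert.1 ha' with rfl | ha'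
    · simpa using (mem_filter.1 (hB' hb)).2
    · rw [Function.update_of_ne (ne_of_mem_of_not_mem ha' ha)]
      exact hg a' ha' b hb

variable (κ) in
/-- `card κ * t` left vertices, so that `t` of them share their colour pattern, and
`t * card κ ^ (card κ * t)` right vertices, so that `t` survive
`exists_subset_forall_mem_color_eq`. -/
def bipartiteRamseyBound (t : ℕ) : ℕ :=
  Fintype.card κ * t + t * Fintype.card κ ^ (Fintype.card κ * t)

theorem le_bipartiteRamseyBound (t : ℕ) : t ≤ bipartiteRamseyBound κ t :=
  (Nat.le_mul_of_pos_right t (pow_pos Fintype.card_pos _)).trans (Nat.le_add_left _ _)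

theorem exists_subsets_color_const (c : β → γ → κ) {t : ℕ} {A : Finset β} {B : Finset γ}
    (hA : bipartiteRamseyBound κ t ≤ #A) (hB : bipartiteRamseyBound κ t ≤ #B) :
    ∃ A' ⊆ A, ∃ B' ⊆ B, t ≤ #A' ∧ t ≤ #B' ∧ ∃ x, ∀ a ∈ A', ∀ b ∈ B', c a b = x := by
  classical
  obtain ⟨A₀, hA₀, hA₀card⟩ := exists_subset_card_eq ((Nat.le_add_right _ _).trans hA)
  obtain ⟨B', hB', ht, g, hg⟩ := exists_subset_forall_mem_color_eq c t A₀ B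
    (by rw [hA₀card]; exact (Nat.le_add_left _ _).trans hB)
  obtain ⟨x, hx⟩ := exists_le_card_filter_eq_of_card_mul_le g hA₀card.ge
  refine ⟨_, (filter_subset _ _).trans hA₀, B', hB', hx, ht, x, fun a ha b hb => ?_⟩
  obtain ⟨ha₀, rfl⟩ := mem_filter.1 ha
  exact hg a ha₀ b hb

end BipartiteRamsey

theorem exists_subsets_color_const_on_pairs {V β κ : Type*} [Fintype κ] [Nonempty κ]
    (c : V → β → V → β → κ) (t : ℕ) (P : Finset (V × V)) (hP : ∀ p ∈ P, p.1 ≠ p.2) :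
    ∀ S : V → Finset β, (∀ v, (bipartiteRamseyBound κ)^[#P] t ≤ #(S v)) →
      ∃ S' : V → Finset β, (∀ v, S' v ⊆ S v ∧ t ≤ #(S' v)) ∧
        ∀ p ∈ P, ∃ x, ∀ i ∈ S' p.1, ∀ j ∈ S' p.2, c p.1 i p.2 j = x := by
  classical
  induction P using Finset.induction_on with
  | empty => exact fun S hS => ⟨S, fun v => ⟨subset_rfl, hS v⟩, by simp⟩
  | @insert p P hp ih =>
    intro S hS
    obtain ⟨u, v⟩ := p
    have huv : u ≠ v := hP _ (mem_insert_self _ _)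
    set m := (bipartiteRamseyBound κ)^[#P] t
    have hS : ∀ w, bipartiteRamseyBound κ m ≤ #(S w) := by
      simpa only [card_insert_of_notMem hp, Function.iterate_succ_apply'] using hS
    obtain ⟨A', hA', B', hB', hA'card, hB'card, x, hx⟩ :=
      exists_subsets_color_const (c u · v ·) (hS u) (hS v)
    set S₁ := Function.update (Function.update S u A') v B'
    have hS₁ : ∀ w, S₁ w ⊆ S w ∧ m ≤ #(S₁ w) := by
      intro w
      simp only [S₁, Function.update_apply]
      split_ifs with hv hu
      · subst hv; exact ⟨hB', hB'card⟩
      · subst hu; exact ⟨hA', hA'card⟩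
      · exact ⟨subset_rfl, (le_bipartiteRamseyBound m).trans (hS w)⟩
    obtain ⟨S', hS', hconst⟩ :=
      ih (fun q hq => hP q (mem_insert_of_mem hq)) S₁ fun w => (hS₁ w).2
    refine ⟨S', fun w => ⟨(hS' w).1.trans (hS₁ w).1, (hS' w).2⟩, ?_⟩
    intro q hq
    rcases mem_insert.1 hq with rfl | hq
    · have hu : S' u ⊆ A' := by simpa [S₁, huv] using (hS' u).1
      have hv : S' v ⊆ B' := by simpa [S₁] using (hS' v).1
      exact ⟨x, fun i hi j hj => hx i (hu hi) j (hv hj)⟩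
    · exact hconst q hq

theorem exists_blowup_parts_pairwise_color_const {V κ : Type*} [Fintype V] [Fintype κ]
    [Nonempty κ] (t : ℕ) :
    ∃ n, ∀ C : Sym2 (V × Fin n) → κ, ∃ ψ : V → Fin t ↪ Fin n,
      ∀ u v, u ≠ v → ∃ x, ∀ i j, C s((u, ψ u i), (v, ψ v j)) = x := by
  classical
  refine ⟨(bipartiteRamseyBound κ)^[#(univ : Finset V).offDiag] t, fun C => ?_⟩
  obtain ⟨S, hS, hconst⟩ := exists_subsets_color_const_on_pairs
    (fun u i v j => C s((u, i), (v, j))) t (univ : Finset V).offDiag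
    (fun p hp => (mem_offDiag.1 hp).2.2) (fun _ => univ) (by simp)
  have e : ∀ v, Fin t ↪ S v := fun v =>
    Classical.choice (Function.Embedding.nonempty_of_card_le (by simpa using (hS v).2))
  refine ⟨fun v => (e v).trans (Function.Embedding.subtype _), fun u v huv => ?_⟩
  obtain ⟨x, hx⟩ := hconst (u, v) (by simp [huv])
  exact ⟨x, fun i j => hx _ (e u i).2 _ (e v j).2⟩

section Blowup

variable {V α : Type} {G : SimpleGraph V} {H : SimpleGraph α} {r n t : ℕ}

theorem hasMonoCopy_of_hasMonoCanonicalBlowup_comp_map_fst {C : Sym2 V → Fin r} (ht : 1 ≤ t)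
    (h : HasMonoCanonicalBlowup G H n t r (C ∘ Sym2.map Prod.fst)) : HasMonoCopy G H C := by
  obtain ⟨φ, ψ, c, hφ, -, hmono⟩ := h
  refine ⟨φ, c, hφ, fun a b hab => ⟨(hmono a b hab).1, ?_⟩⟩
  simpa using (hmono a b hab).2 ⟨0, ht⟩ ⟨0, ht⟩

theorem exists_not_hasMonoCanonicalBlowup_of_not_arrowsFor (h : ¬ ArrowsFor G H r)
    (ht : 1 ≤ t) : ∃ C : Sym2 (V × Fin n) → Fin r, ¬ HasMonoCanonicalBlowup G H n t r C := by
  obtain ⟨C, hC⟩ := not_forall.1 h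
  exact ⟨_, fun hB => hC (hasMonoCopy_of_hasMonoCanonicalBlowup_comp_map_fst ht hB)⟩

theorem arrowsFor_of_blowupArrow (ht : 1 ≤ t) (h : BlowupArrow G H r n t) : ArrowsFor G H r :=
  fun _ => hasMonoCopy_of_hasMonoCanonicalBlowup_comp_map_fst ht (h _)

theorem exists_blowupArrow_of_arrowsFor [Fintype V] (hr : 1 ≤ r) (ht : 1 ≤ t)
    (h : ArrowsFor G H r) : ∃ n, BlowupArrow G H r n t := by
  have : Nonempty (Fin r) := ⟨⟨0, hr⟩⟩
  obtain ⟨n, hn⟩ := exists_blowup_parts_pairwise_color_const (V := V) (κ := Fin r) t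
  refine ⟨n, fun C => ?_⟩
  obtain ⟨ψ, hψ⟩ := hn C
  let i₀ : Fin t := ⟨0, ht⟩
  obtain ⟨φ, c, hφ, hmono⟩ := h <|
    Sym2.lift ⟨fun u v => C s((u, ψ u i₀), (v, ψ v i₀)), fun _ _ => congrArg C Sym2.eq_swap⟩
  refine ⟨φ, fun a => ψ (φ a), c, hφ, fun a => (ψ (φ a)).injective, fun a b hab => ?_⟩
  obtain ⟨hadj, hc⟩ := hmono a b hab
  obtain ⟨x, hx⟩ := hψ _ _ hadj.ne
  refine ⟨hadj, fun i j => ?_⟩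
  rw [hx, ← hx i₀ i₀]
  exact hc

end Blowup

theorem blowup_ramsey_finite_iff_arrows_general
    (α V : Type) [Fintype V] (H : SimpleGraph α)
    (G : SimpleGraph V) (r : ℕ) (hr : 1 ≤ r) :
    (ArrowsFor G H r ↔ ∀ t : ℕ, 1 ≤ t → ∃ n : ℕ, BlowupArrow G H r n t) ∧
    (¬ ArrowsFor G H r → ∀ n t : ℕ, 1 ≤ t →
      ∃ C : Sym2 (V × Fin n) → Fin r, ¬ HasMonoCanonicalBlowup G H n t r C) :=
  ⟨⟨fun h _ ht => exists_blowupArrow_of_arrowsFor hr ht h,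
      fun h => let ⟨_, hn⟩ := h 1 le_rfl; arrowsFor_of_blowupArrow le_rfl hn⟩,
    fun h _ _ ht => exists_not_hasMonoCanonicalBlowup_of_not_arrowsFor h ht⟩

/-- `G →_r H` holds if and only if for every positive integer `t` there is an
`n` such that every `r`-coloring of `G[n]` contains a monochromatic canonical copy of `H[t]`.
Moreover, if `G ↛_r H`, then for every `n` and every (positive) `t` some `r`-coloring of
`G[n]` has no monochromatic canonical copy of `H[t]`. -/
theorem blowup_ramsey_finite_iff_arrows
    (α V : Type) [Fintype α] [Fintype V] (H : SimpleGraph α) (hH : ∃ x y, H.Adj x y)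
    (G : SimpleGraph V) (r : ℕ) (hr : 1 ≤ r) :
    (ArrowsFor G H r ↔ ∀ t : ℕ, 1 ≤ t → ∃ n : ℕ, BlowupArrow G H r n t) ∧
    (¬ ArrowsFor G H r → ∀ n t : ℕ, 1 ≤ t →
      ∃ C : Sym2 (V × Fin n) → Fin r, ¬ HasMonoCanonicalBlowup G H n t r C) :=
  blowup_ramsey_finite_iff_arrows_general α V H G r hr
end

section
/- Let G and H be graphs, with H having at least one edge, and r ≥ 1 an integer. Then the following are equivalent: (i) every r-coloring of the edges of G contains a monochromatic copy of some homomorphic image of H; (ii) for every positive integer t there exists n such that every r-coloring of the edges of the blowup G[n] contains a monochromatic (not necessarily canonical) copy of H[t]. -/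
/-- `H'` is a homomorphic image of `H`: it is obtained from `H` by repeatedly identifying pairs
of non-adjacent vertices. Equivalently, there is a surjection `f` from `V(H)` onto `V(H')`
such that the edges of `H'` are precisely the images of the edges of `H`. (`H` itself is a
homomorphic image of `H`, via the identity.) -/
def IsHomomorphicImage {α β : Type} (H : SimpleGraph α) (H' : SimpleGraph β) : Prop :=
  ∃ f : α → β, Function.Surjective f ∧
    ∀ x y, H'.Adj x y ↔ ∃ a b, H.Adj a b ∧ f a = x ∧ f b = y

/-- Bipartite Ramsey: any `r`-coloring of a big enough complete bipartite graph
contains a monochromatic `K_{s,s}`. -/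
lemma bip_ramsey (r s : ℕ) (hr : 0 < r) :
    ∃ N : ℕ, s ≤ N ∧ ∀ d : Fin N → Fin N → Fin r,
      ∃ (A B : Fin s → Fin N) (c : Fin r), Function.Injective A ∧ Function.Injective B ∧
        ∀ i j, d (A i) (B j) = c := by
  classical
  rcases Nat.eq_zero_or_pos s with hs | hs
  · subst hs
    exact ⟨0, le_rfl, fun d => ⟨Fin.elim0, Fin.elim0, ⟨0, hr⟩,
      fun i => i.elim0, fun i => i.elim0, fun i => i.elim0⟩⟩
  obtain ⟨s', rfl⟩ : ∃ s', s = s' + 1 := ⟨s - 1, by omega⟩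
  set s := s' + 1 with hs'
  set m := r * s with hm
  set N := s + m + s * r ^ m with hN
  have hmN : m ≤ N := by omega
  refine ⟨N, by omega, fun d => ?_⟩
  have hp : 1 ≤ r ^ m := Nat.one_le_pow _ _ hr
  let g : Fin N → (Fin m → Fin r) := fun u j => d u (Fin.castLE hmN j)
  have hcard : Fintype.card (Fin m → Fin r) * s' < Fintype.card (Fin N) := by
    simp only [Fintype.card_fun, Fintype.card_fin]
    have h1 : r ^ m * s' < r ^ m * s := by
      have : r ^ m * s = r ^ m * s' + r ^ m := by rw [hs']; ring
      omega
    have h2 : r ^ m * s = s * r ^ m := by ring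
    omega
  obtain ⟨χ, hχ⟩ := Fintype.exists_lt_card_fiber_of_mul_lt_card (f := g) hcard
  obtain ⟨T, hTsub, hTcard⟩ := Finset.exists_subset_card_eq (n := s) hχ
  let A : Fin s → Fin N := fun i => T.orderEmbOfFin hTcard i
  have hA : ∀ i, g (A i) = χ := by
    intro i
    have := hTsub (T.orderEmbOfFin_mem hTcard i)
    simpa using this
  have hcard2 : Fintype.card (Fin r) * s' < Fintype.card (Fin m) := by
    simp only [Fintype.card_fin]
    have : r * s = r * s' + r := by rw [hs']; ring
    omega
  obtain ⟨c, hc⟩ := Fintype.exists_lt_card_fiber_of_mul_lt_card (f := χ) hcard2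
  obtain ⟨U, hUsub, hUcard⟩ := Finset.exists_subset_card_eq (n := s) hc
  let B : Fin s → Fin N := fun j => Fin.castLE hmN (U.orderEmbOfFin hUcard j)
  have hB : ∀ j, χ (U.orderEmbOfFin hUcard j) = c := by
    intro j
    have := hUsub (U.orderEmbOfFin_mem hUcard j)
    simpa using this
  refine ⟨A, B, c, ?_, ?_, fun i j => ?_⟩
  · exact fun i j h => (T.orderEmbOfFin hTcard).injective h
  · intro i j h
    exact (U.orderEmbOfFin hUcard).injective (Fin.castLE_injective hmN h)
  · have h1 : d (A i) (B j) = g (A i) (U.orderEmbOfFin hUcard j) := rfl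
    rw [h1, hA i, hB j]

/-- Core shrinking lemma: for a large enough `N`, any coloring of the `N`-blowup edges
can be refined to sets of size `s` for each vertex such that between the parts of
each listed pair the coloring is constant. -/
lemma core_shrink {V : Type} [DecidableEq V] (r : ℕ) (hr : 0 < r) (L : List (V × V))
    (hL : ∀ p ∈ L, p.1 ≠ p.2) (s : ℕ) :
    ∃ N : ℕ, ∀ d : V → V → Fin N → Fin N → Fin r,
      ∃ (S : V → Fin s → Fin N) (χ : V → V → Fin r),
        (∀ v, Function.Injective (S v)) ∧
        ∀ p ∈ L, ∀ i j, d p.1 p.2 (S p.1 i) (S p.2 j) = χ p.1 p.2 := by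
  induction L with
  | nil =>
    exact ⟨s, fun d => ⟨fun _ => id, fun _ _ => ⟨0, hr⟩, fun _ => fun _ _ h => h, by simp⟩⟩
  | cons p L' ih =>
    obtain ⟨u, v⟩ := p
    have hne : u ≠ v := hL (u, v) List.mem_cons_self
    obtain ⟨N', hN'⟩ := ih (fun q hq => hL q (List.mem_cons_of_mem _ hq))
    obtain ⟨M, hMle, hM⟩ := bip_ramsey r N' hr
    refine ⟨M, fun d => ?_⟩
    obtain ⟨A, B, c, hAinj, hBinj, hAB⟩ := hM (d u v)
    let e : V → Fin N' → Fin M := fun w =>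
      if w = u then A else if w = v then B else Fin.castLE hMle
    have heu : e u = A := if_pos rfl
    have hev : e v = B := by
      simp [e, Ne.symm hne]
    have einj : ∀ w, Function.Injective (e w) := by
      intro w
      simp only [e]
      split_ifs
      exacts [hAinj, hBinj, Fin.castLE_injective hMle]
    obtain ⟨S', χ', hS'inj, hS'⟩ := hN' (fun w x i j => d w x (e w i) (e x j))
    refine ⟨fun w => e w ∘ S' w,
      fun p q => if p = u ∧ q = v then c else χ' p q,
      fun w => (einj w).comp (hS'inj w), ?_⟩
    intro p hp i j
    by_cases hpq : p.1 = u ∧ p.2 = v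
    · obtain ⟨h1, h2⟩ := hpq
      simp only [h1, h2, if_pos (And.intro rfl rfl), Function.comp_apply]
      rw [heu, hev]
      exact hAB _ _
    · have hp' : p ∈ L' := by
        rcases List.mem_cons.mp hp with h | h
        · exact absurd ⟨by rw [h], by rw [h]⟩ hpq
        · exact h
      simp only [if_neg hpq, Function.comp_apply]
      exact hS' p hp' i j

/-- Every `r`-coloring of `G` contains a monochromatic copy of some
homomorphic image of `H` if and only if for every positive integer `t` there is an `n` such
that every `r`-coloring of `G[n]` contains a monochromatic (not necessarily canonical) copy of
`H[t]`. -/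
theorem blowup_ramsey_noncanonical_iff_hom_arrows
    (α V : Type) [Fintype α] [Fintype V] (H : SimpleGraph α) (hH : ∃ x y, H.Adj x y)
    (G : SimpleGraph V) (r : ℕ) (hr : 1 ≤ r) :
    (∀ C : Sym2 V → Fin r, ∃ (β : Type) (H' : SimpleGraph β),
        IsHomomorphicImage H H' ∧ HasMonoCopy G H' C) ↔
    (∀ t : ℕ, 1 ≤ t → ∃ n : ℕ, ∀ C : Sym2 (V × Fin n) → Fin r,
        HasMonoCopy (blowupGraph G n) (blowupGraph H t) C) := by
  classical
  constructor
  · -- forward direction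
    intro h1 t ht
    obtain ⟨x0, y0, hxy0⟩ := hH
    let s := Fintype.card (α × Fin t)
    have hzero : 0 < s := Fintype.card_pos_iff.mpr ⟨(x0, ⟨0, ht⟩)⟩
    let L := ((Finset.univ : Finset (V × V)).filter fun p => G.Adj p.1 p.2).toList
    have hLmem : ∀ p : V × V, p ∈ L ↔ G.Adj p.1 p.2 := by
      intro p; simp [L, Finset.mem_toList]
    obtain ⟨N, hN⟩ := core_shrink r hr L (fun p hp => ((hLmem p).1 hp).ne) s
    refine ⟨N, fun C => ?_⟩
    obtain ⟨S, χ, hSinj, hS⟩ := hN (fun u v i j => C s((u, i), (v, j)))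
    let i0 : Fin s := ⟨0, hzero⟩
    let Cg : Sym2 V → Fin r := fun e => C (e.map fun v => (v, S v i0))
    obtain ⟨β, H', ⟨f, hfsurj, hfadj⟩, g, c, hginj, hgcopy⟩ := h1 Cg
    let eqv : (α × Fin t) ≃ Fin s := Fintype.equivFin (α × Fin t)
    refine ⟨fun p => (g (f p.1), S (g (f p.1)) (eqv p)), c, ?_, ?_⟩
    · intro p q hpq
      have h1' : g (f p.1) = g (f q.1) := congrArg Prod.fst hpq
      have h2' : S (g (f p.1)) (eqv p) = S (g (f q.1)) (eqv q) := congrArg Prod.snd hpq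
      rw [h1'] at h2'
      exact eqv.injective (hSinj _ h2')
    · intro a b hab
      have hab' : H.Adj a.1 b.1 := hab
      have hH' : H'.Adj (f a.1) (f b.1) := (hfadj _ _).2 ⟨a.1, b.1, hab', rfl, rfl⟩
      obtain ⟨hGadj, hcol⟩ := hgcopy _ _ hH'
      refine ⟨hGadj, ?_⟩
      have hmemL : (g (f a.1), g (f b.1)) ∈ L := (hLmem _).2 hGadj
      have h2 := hS _ hmemL (eqv a) (eqv b)
      have h3 := hS _ hmemL i0 i0
      have h4 : Cg s(g (f a.1), g (f b.1)) =
          C s((g (f a.1), S (g (f a.1)) i0), (g (f b.1), S (g (f b.1)) i0)) := by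
        simp [Cg, Sym2.map_pair_eq]
      exact h2.trans ((h3.symm.trans h4.symm).trans hcol)
  · -- backward direction
    intro h2 C
    obtain ⟨n, hn⟩ := h2 1 le_rfl
    obtain ⟨F, c, hFinj, hFcopy⟩ := hn (fun e => C (e.map Prod.fst))
    let g : α → V := fun a => (F (a, 0)).1
    have hGadj : ∀ a b, H.Adj a b → G.Adj (g a) (g b) := by
      intro a b hab
      exact (hFcopy (a, 0) (b, 0) hab).1
    let H' : SimpleGraph {v : V // ∃ a, g a = v} :=
      { Adj := fun x y => ∃ a b, H.Adj a b ∧ g a = x.1 ∧ g b = y.1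
        symm := by
          constructor
          rintro x y ⟨a, b, hab, ha, hb⟩
          exact ⟨b, a, hab.symm, hb, ha⟩
        loopless := by
          constructor
          rintro x ⟨a, b, hab, ha, hb⟩
          exact (hGadj a b hab).ne (ha.trans hb.symm) }
    refine ⟨{v : V // ∃ a, g a = v}, H', ⟨fun a => ⟨g a, a, rfl⟩, ?_, ?_⟩, Subtype.val, c,
      Subtype.val_injective, ?_⟩
    · rintro ⟨v, a, ha⟩
      exact ⟨a, Subtype.ext ha⟩
    · intro x y
      constructor
      · rintro ⟨a, b, hab, ha, hb⟩
        exact ⟨a, b, hab, Subtype.ext ha, Subtype.ext hb⟩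
      · rintro ⟨a, b, hab, ha, hb⟩
        exact ⟨a, b, hab, congrArg Subtype.val ha, congrArg Subtype.val hb⟩
    · rintro x y ⟨a, b, hab, ha, hb⟩
      have hcol := (hFcopy (a, 0) (b, 0) hab).2
      have hmap : (Sym2.map Prod.fst s(F (a, 0), F (b, 0))) = s(g a, g b) := by
        simp [Sym2.map_pair_eq, g]
      refine ⟨?_, ?_⟩
      · rw [← ha, ← hb]; exact hGadj a b hab
      · rw [← ha, ← hb]
        calc C s(g a, g b) = C (Sym2.map Prod.fst s(F (a, 0), F (b, 0))) := by rw [hmap]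
        _ = c := hcol
end
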